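/- Let c ∈ ℝ. For all natural numbers q ≤ m and α ≤ 2m+1, applying the operator c^{2q} ∂_x^α ∂_y Δ^q to the tensor-product Taylor polynomial p and evaluating at the center gives c^{2q} ∂_x^α ∂_y Δ^q p(x_i, y_j) = c^{2q} Σ_{j} C(q,j) · (2(q−j)+α)!/Δx^{2(q−j)+α} · (2j+1)!/Δy^{2j+1} · c_{2(q−j)+α, 2j+1}, where the sum runs over 0 ≤ j ≤ q with 2(q−j)+α ≤ 2m+1 and 2j+1 ≤ 2m+1. -/

import Mathlib

open Finset

/-- Partial derivative in the first (x) variable. -/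
noncomputable def pd1 (f : ℝ × ℝ → ℝ) : ℝ × ℝ → ℝ :=
  fun p => deriv (fun x => f (x, p.2)) p.1

/-- Partial derivative in the second (y) variable. -/
noncomputable def pd2 (f : ℝ × ℝ → ℝ) : ℝ × ℝ → ℝ :=
  fun p => deriv (fun y => f (p.1, y)) p.2

/-- The Laplacian Δ = ∂_x² + ∂_y². -/
noncomputable def lapl2 (f : ℝ × ℝ → ℝ) : ℝ × ℝ → ℝ :=
  fun p => pd1 (pd1 f) p + pd2 (pd2 f) p

/-- The tensor-product Taylor polynomial
p(x,y) = Σ_{l₁=0}^{2m+1} Σ_{l₂=0}^{2m+1} c_{l₁,l₂} ((x−xᵢ)/Δx)^{l₁} ((y−yⱼ)/Δy)^{l₂}. -/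
noncomputable def taylorPoly (m : ℕ) (xi yj dx dy : ℝ) (co : ℕ → ℕ → ℝ) : ℝ × ℝ → ℝ :=
  fun p => ∑ l₁ ∈ Finset.range (2 * m + 2), ∑ l₂ ∈ Finset.range (2 * m + 2),
    co l₁ l₂ * ((p.1 - xi) / dx) ^ l₁ * ((p.2 - yj) / dy) ^ l₂

/-!
In coordinates scaled to the cell, `∂_x` and `∂_y` act on the coefficient array of a polynomial of
degree `< n` in each variable by the shifts `a l₁ l₂ ↦ (l₁ + 1) a (l₁ + 1) l₂ / Δx` and
`a l₁ l₂ ↦ (l₂ + 1) a l₁ (l₂ + 1) / Δy`. These commute, so the binomial theorem gives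
`∂_x^α ∂_y Δ^q = ∑ⱼ C(q, j) ∂_x^(2(q-j)+α) ∂_y^(2j+1)`. Evaluating at the centre reads off the
`(0, 0)` coefficient, which `∂_x^A ∂_y^B` turns into `A! B! / (Δx^A Δy^B) · a A B`, or `0` once
`A` or `B` reaches `n`.
-/

theorem sum_range_eq_sum_range_ite_succ {M : Type*} [AddCommMonoid M] (n : ℕ) (g : ℕ → M)
    (hg : g 0 = 0) : ∑ l ∈ range n, g l = ∑ l ∈ range n, if l + 1 < n then g (l + 1) else 0 := by
  cases n with
  | zero => rfl
  | succ n =>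
    rw [sum_range_succ', hg, add_zero, sum_range_succ, if_neg (lt_irrefl _), add_zero]
    exact sum_congr rfl fun l hl => (if_pos (by simpa using hl)).symm

theorem hasDerivAt_sum_mul_div_pow (n : ℕ) (x₀ h : ℝ) (b : ℕ → ℝ) (x : ℝ) :
    HasDerivAt (fun x => ∑ l ∈ range n, b l * ((x - x₀) / h) ^ l)
      (∑ l ∈ range n, (if l + 1 < n then (l + 1) * b (l + 1) / h else 0) * ((x - x₀) / h) ^ l)
      x := by
  have hmonomial (l : ℕ) : HasDerivAt (fun x => b l * ((x - x₀) / h) ^ l)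
      (b l * (l * ((x - x₀) / h) ^ (l - 1) * (1 / h))) x :=
    ((((hasDerivAt_id x).sub_const x₀).div_const h).pow l).const_mul (b l)
  refine (HasDerivAt.fun_sum fun l (_ : l ∈ range n) => hmonomial l).congr_deriv ?_
  rw [sum_range_eq_sum_range_ite_succ _ _ (by simp)]
  refine sum_congr rfl fun l _ => ?_
  split_ifs
  · push_cast
    ring
  · simp

theorem Commute.pow_mul_mul_sq_add_sq_pow {R : Type*} [Semiring R] {x y : R} (h : Commute x y)
    (α q : ℕ) : x ^ α * y * (x ^ 2 + y ^ 2) ^ q =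
      ∑ j ∈ range (q + 1), q.choose j • (x ^ (2 * (q - j) + α) * y ^ (2 * j + 1)) := by
  rw [add_comm, (h.symm.pow_pow 2 2).add_pow, mul_sum]
  refine sum_congr rfl fun j _ => ?_
  rw [← nsmul_eq_mul', mul_smul_comm, ← pow_mul, ← pow_mul, ← mul_assoc, mul_assoc (x ^ α),
    ← pow_succ', mul_assoc, (h.pow_pow _ _).symm.eq, ← mul_assoc, ← pow_add, add_comm α]

noncomputable def coeffPoly (n : ℕ) (xi yj dx dy : ℝ) (a : ℕ → ℕ → ℝ) : ℝ × ℝ → ℝ :=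
  fun p => ∑ l₁ ∈ range n, ∑ l₂ ∈ range n,
    a l₁ l₂ * ((p.1 - xi) / dx) ^ l₁ * ((p.2 - yj) / dy) ^ l₂

section coeffPoly

variable (n : ℕ) (xi yj dx dy : ℝ)

theorem taylorPoly_eq_coeffPoly (m : ℕ) (co : ℕ → ℕ → ℝ) :
    taylorPoly m xi yj dx dy co = coeffPoly (2 * m + 2) xi yj dx dy co :=
  rfl

theorem coeffPoly_add (a b : ℕ → ℕ → ℝ) (p : ℝ × ℝ) :
    coeffPoly n xi yj dx dy (a + b) p = coeffPoly n xi yj dx dy a p + coeffPoly n xi yj dx dy b p := by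
  simp only [coeffPoly, Pi.add_apply, add_mul, sum_add_distrib]

theorem coeffPoly_apply_swap (a : ℕ → ℕ → ℝ) (p : ℝ × ℝ) :
    coeffPoly n yj xi dy dx (Function.swap a) p.swap = coeffPoly n xi yj dx dy a p := by
  rw [coeffPoly, coeffPoly, sum_comm]
  exact sum_congr rfl fun _ _ => sum_congr rfl fun _ _ => mul_right_comm _ _ _

theorem coeffPoly_apply_center {n : ℕ} (hn : 0 < n) (a : ℕ → ℕ → ℝ) :
    coeffPoly n xi yj dx dy a (xi, yj) = a 0 0 := by
  simp [coeffPoly, zero_pow_eq, hn]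

end coeffPoly

/- The truncation at `n` makes `coeffPoly n` intertwine these operators with `pd1` and `pd2` for
every array, without a support condition on it. -/
noncomputable def coeffDerivX (n : ℕ) (h : ℝ) : Module.End ℝ (ℕ → ℕ → ℝ) where
  toFun a l₁ l₂ := if l₁ + 1 < n then (l₁ + 1) * a (l₁ + 1) l₂ / h else 0
  map_add' a b := by ext; simp only [Pi.add_apply]; split_ifs <;> ring
  map_smul' r a := by
    ext; simp only [Pi.smul_apply, smul_eq_mul, RingHom.id_apply]; split_ifs <;> ring

noncomputable def coeffDerivY (n : ℕ) (h : ℝ) : Module.End ℝ (ℕ → ℕ → ℝ) where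
  toFun a l₁ l₂ := if l₂ + 1 < n then (l₂ + 1) * a l₁ (l₂ + 1) / h else 0
  map_add' a b := by ext; simp only [Pi.add_apply]; split_ifs <;> ring
  map_smul' r a := by
    ext; simp only [Pi.smul_apply, smul_eq_mul, RingHom.id_apply]; split_ifs <;> ring

section coeffDeriv

variable (n : ℕ) (h : ℝ)

theorem coeffDerivX_swap (a : ℕ → ℕ → ℝ) :
    coeffDerivX n h (Function.swap a) = Function.swap (coeffDerivY n h a) :=
  rfl

theorem commute_coeffDerivX_coeffDerivY (dx dy : ℝ) :
    Commute (coeffDerivX n dx) (coeffDerivY n dy) := by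
  ext a l₁ l₂
  simp only [Module.End.mul_apply, coeffDerivX, coeffDerivY, LinearMap.coe_mk, AddHom.coe_mk]
  split_ifs <;> ring

theorem coeffDerivY_pow_apply (k : ℕ) (a : ℕ → ℕ → ℝ) (l₁ : ℕ) {l₂ : ℕ} (hl₂ : l₂ < n) :
    (coeffDerivY n h ^ k) a l₁ l₂ =
      if l₂ + k < n then ((l₂ + k).factorial / l₂.factorial : ℝ) / h ^ k * a l₁ (l₂ + k)
      else 0 := by
  induction k generalizing a with
  | zero => simp [hl₂, Nat.factorial_ne_zero]
  | succ k ih =>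
    rw [pow_succ, Module.End.mul_apply, ih]
    simp only [coeffDerivY, LinearMap.coe_mk, AddHom.coe_mk, ← add_assoc, Nat.factorial_succ]
    split_ifs <;> first | omega | push_cast; ring

theorem coeffDerivX_pow_apply (k : ℕ) (a : ℕ → ℕ → ℝ) {l₁ : ℕ} (hl₁ : l₁ < n) (l₂ : ℕ) :
    (coeffDerivX n h ^ k) a l₁ l₂ =
      if l₁ + k < n then ((l₁ + k).factorial / l₁.factorial : ℝ) / h ^ k * a (l₁ + k) l₂
      else 0 := by
  have hswap : Function.Semiconj Function.swap (coeffDerivY n h) (coeffDerivX n h) :=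
    fun b => (coeffDerivX_swap n h b).symm
  rw [Module.End.pow_apply, ← hswap.iterate_right k (Function.swap a), ← Module.End.pow_apply]
  exact coeffDerivY_pow_apply n h k _ l₂ hl₁

end coeffDeriv

theorem coeffDerivX_pow_coeffDerivY_pow_apply_zero {n : ℕ} (hn : 0 < n) (dx dy : ℝ) (A B : ℕ)
    (a : ℕ → ℕ → ℝ) :
    (coeffDerivX n dx ^ A) ((coeffDerivY n dy ^ B) a) 0 0 =
      if A < n ∧ B < n then (A.factorial / dx ^ A : ℝ) * (B.factorial / dy ^ B) * a A B
      else 0 := by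
  rw [coeffDerivX_pow_apply n dx A _ hn, zero_add, coeffDerivY_pow_apply n dy B a A hn]
  simp only [zero_add, Nat.factorial_zero, Nat.cast_one, div_one]
  split_ifs <;> first | omega | ring

section partialDerivatives

variable (n : ℕ) (xi yj dx dy : ℝ)

theorem pd2_coeffPoly (a : ℕ → ℕ → ℝ) :
    pd2 (coeffPoly n xi yj dx dy a) = coeffPoly n xi yj dx dy (coeffDerivY n dy a) := by
  funext p
  have hrows (b : ℕ → ℕ → ℝ) (y : ℝ) : coeffPoly n xi yj dx dy b (p.1, y) =
      ∑ l₁ ∈ range n, ((p.1 - xi) / dx) ^ l₁ * ∑ l₂ ∈ range n, b l₁ l₂ * ((y - yj) / dy) ^ l₂ := by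
    simp only [coeffPoly, mul_sum]
    exact sum_congr rfl fun _ _ => sum_congr rfl fun _ _ => by ring
  simp only [pd2, hrows]
  exact (HasDerivAt.fun_sum fun l₁ (_ : l₁ ∈ range n) =>
    (hasDerivAt_sum_mul_div_pow n yj dy (a l₁) p.2).const_mul (((p.1 - xi) / dx) ^ l₁)).deriv

theorem pd1_coeffPoly (a : ℕ → ℕ → ℝ) :
    pd1 (coeffPoly n xi yj dx dy a) = coeffPoly n xi yj dx dy (coeffDerivX n dx a) := by
  have hswap : coeffPoly n xi yj dx dy a = coeffPoly n yj xi dy dx (Function.swap a) ∘ Prod.swap :=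
    funext fun p => (coeffPoly_apply_swap n xi yj dx dy a p).symm
  funext p
  calc pd1 (coeffPoly n xi yj dx dy a) p
      = pd2 (coeffPoly n yj xi dy dx (Function.swap a)) p.swap := by rw [hswap]; rfl
    _ = coeffPoly n xi yj dx dy (coeffDerivX n dx a) p := by
      rw [pd2_coeffPoly]; exact coeffPoly_apply_swap n xi yj dx dy _ p

theorem lapl2_coeffPoly (a : ℕ → ℕ → ℝ) :
    lapl2 (coeffPoly n xi yj dx dy a) =
      coeffPoly n xi yj dx dy ((coeffDerivX n dx ^ 2 + coeffDerivY n dy ^ 2) a) := by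
  funext p
  simp only [lapl2, pd1_coeffPoly, pd2_coeffPoly, LinearMap.add_apply, sq, Module.End.mul_apply,
    coeffPoly_add]

theorem pd1_iterate_pd2_lapl2_iterate_coeffPoly (a : ℕ → ℕ → ℝ) (q α : ℕ) :
    pd1^[α] (pd2 (lapl2^[q] (coeffPoly n xi yj dx dy a))) = coeffPoly n xi yj dx dy
      ((coeffDerivX n dx ^ α * coeffDerivY n dy *
        (coeffDerivX n dx ^ 2 + coeffDerivY n dy ^ 2) ^ q) a) := by
  have hX : Function.Semiconj (coeffPoly n xi yj dx dy) (coeffDerivX n dx) pd1 :=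
    fun b => (pd1_coeffPoly n xi yj dx dy b).symm
  have hL : Function.Semiconj (coeffPoly n xi yj dx dy)
      ⇑(coeffDerivX n dx ^ 2 + coeffDerivY n dy ^ 2) lapl2 :=
    fun b => (lapl2_coeffPoly n xi yj dx dy b).symm
  rw [← hL.iterate_right q a, pd2_coeffPoly, ← hX.iterate_right α]
  simp only [Module.End.mul_apply, Module.End.pow_apply]

end partialDerivatives

theorem neumann_corner_hermite_cbc_formula_general
    (m : ℕ) (xi yj dx dy : ℝ) (co : ℕ → ℕ → ℝ)
    (c : ℝ) :
    ∀ q α : ℕ, q ≤ m → α ≤ 2 * m + 1 →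
      c ^ (2 * q) *
        (pd1^[α] (pd2 (lapl2^[q] (taylorPoly m xi yj dx dy co)))) (xi, yj)
      = c ^ (2 * q) *
          ∑ j ∈ (Finset.range (q + 1)).filter
              (fun j => 2 * (q - j) + α ≤ 2 * m + 1 ∧ 2 * j + 1 ≤ 2 * m + 1),
            (q.choose j : ℝ) *
              (((2 * (q - j) + α).factorial : ℝ) / dx ^ (2 * (q - j) + α)) *
              (((2 * j + 1).factorial : ℝ) / dy ^ (2 * j + 1)) *
              co (2 * (q - j) + α) (2 * j + 1) := by
  intro q α _ _
  congr 1
  rw [taylorPoly_eq_coeffPoly, pd1_iterate_pd2_lapl2_iterate_coeffPoly,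
    coeffPoly_apply_center _ _ _ _ (by omega),
    (commute_coeffDerivX_coeffDerivY _ dx dy).pow_mul_mul_sq_add_sq_pow,
    LinearMap.sum_apply, Finset.sum_apply, Finset.sum_apply, sum_filter]
  refine sum_congr rfl fun j _ => ?_
  rw [LinearMap.smul_apply, Pi.smul_apply, Pi.smul_apply, nsmul_eq_mul, Module.End.mul_apply,
    coeffDerivX_pow_coeffDerivY_pow_apply_zero (by omega)]
  split_ifs <;> first | omega | ring

theorem neumann_corner_hermite_cbc_formula
    (m : ℕ) (xi yj dx dy : ℝ) (hdx : dx ≠ 0) (hdy : dy ≠ 0) (co : ℕ → ℕ → ℝ)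
    (c : ℝ) :
    ∀ q α : ℕ, q ≤ m → α ≤ 2 * m + 1 →
      c ^ (2 * q) *
        (pd1^[α] (pd2 (lapl2^[q] (taylorPoly m xi yj dx dy co)))) (xi, yj)
      = c ^ (2 * q) *
          ∑ j ∈ (Finset.range (q + 1)).filter
              (fun j => 2 * (q - j) + α ≤ 2 * m + 1 ∧ 2 * j + 1 ≤ 2 * m + 1),
            (q.choose j : ℝ) *
              (((2 * (q - j) + α).factorial : ℝ) / dx ^ (2 * (q - j) + α)) *
              (((2 * j + 1).factorial : ℝ) / dy ^ (2 * j + 1)) *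
              co (2 * (q - j) + α) (2 * j + 1) :=
  neumann_corner_hermite_cbc_formula_general m xi yj dx dy co c
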